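/- The matrix A of the discrete five-point Laplacian system with Dirichlet boundary rows (as in Eq. (2)), namely A(v,v) = 1 for all grid points v, A(v,w) = -1/4 when v is interior and w is one of its four grid neighbors, and A(v,w) = 0 otherwise, is invertible. -/

import Mathlib

/-!
Discrete maximum principle. Let `A u = 0`, where `A` is a Z-matrix (nonpositive off-diagonal
entries) with nonnegative row sums, and let `u` have a positive maximum `M` at `i`. Then
`0 = M · ∑ⱼ A i j + ∑ⱼ A i j (u j - M)` is a sum of two nonnegative terms, so the row sum
vanishes and `u = M` wherever `A i j ≠ 0`. For the five-point matrix, every interior row has a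
nonzero entry at its western neighbour, so a maximum can be pushed west until it reaches a
boundary row, whose row sum is `1`. Hence `u ≤ 0`, and likewise `-u ≤ 0`.
-/

/-- The matrix of the discrete five-point Laplacian system with Dirichlet boundary rows. -/
noncomputable def fivePointMatrix (n m : ℕ) : Matrix (Fin (n + 1) × Fin (m + 1)) (Fin (n + 1) × Fin (m + 1)) ℝ :=
  Matrix.of fun v w =>
    if v = w then 1
    else if (0 < (v.1 : ℕ) ∧ (v.1 : ℕ) < n ∧ 0 < (v.2 : ℕ) ∧ (v.2 : ℕ) < m) ∧
        (((v.1 : ℤ) - (w.1 : ℤ)).natAbs + ((v.2 : ℤ) - (w.2 : ℤ)).natAbs = 1) then -1/4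
    else 0

open Finset

namespace Matrix

variable {ι : Type*} [Fintype ι]

/-- `φ` witnesses weak chaining: every row with zero sum has a nonzero entry in a column of
smaller potential, so following such entries always ends at a row with positive sum. -/
structure IsWeaklyChainedZMatrix (A : Matrix ι ι ℝ) (φ : ι → ℕ) : Prop where
  apply_nonpos : ∀ i j, i ≠ j → A i j ≤ 0
  sum_row_nonneg : ∀ i, 0 ≤ ∑ j, A i j
  chain : ∀ i, 0 < ∑ j, A i j ∨ ∃ j, A i j ≠ 0 ∧ φ j < φ i

theorem sum_row_eq_zero_and_eq_max_of_mulVec_eq_zero {A : Matrix ι ι ℝ}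
    (hoff : ∀ i j, i ≠ j → A i j ≤ 0) (hrow : ∀ i, 0 ≤ ∑ j, A i j) {u : ι → ℝ}
    (hu : A *ᵥ u = 0) {i : ι} (hmax : ∀ j, u j ≤ u i) (hpos : 0 < u i) :
    ∑ j, A i j = 0 ∧ ∀ j, A i j ≠ 0 → u j = u i := by
  have hterm_nonneg : ∀ j, 0 ≤ A i j * (u j - u i) := fun j => by
    rcases eq_or_ne i j with rfl | hij
    · simp
    · exact mul_nonneg_of_nonpos_of_nonpos (hoff i j hij) (sub_nonpos.mpr (hmax j))
  have hsplit : u i * ∑ j, A i j + ∑ j, A i j * (u j - u i) = 0 := by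
    have h := congrFun hu i
    simp only [mulVec, dotProduct, Pi.zero_apply] at h
    simp only [mul_sub, sum_sub_distrib, mul_sum, ← h]
    ring_nf
  have hfirst : 0 ≤ u i * ∑ j, A i j := mul_nonneg hpos.le (hrow i)
  have hsecond : 0 ≤ ∑ j, A i j * (u j - u i) := sum_nonneg fun j _ => hterm_nonneg j
  refine ⟨?_, fun j hj => ?_⟩
  · exact (mul_eq_zero.mp (by linarith)).resolve_left hpos.ne'
  · have hzero : A i j * (u j - u i) = 0 :=
      (sum_eq_zero_iff_of_nonneg fun j _ => hterm_nonneg j).mp (by linarith) j (mem_univ j)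
    exact sub_eq_zero.mp ((mul_eq_zero.mp hzero).resolve_left hj)

theorem IsWeaklyChainedZMatrix.nonpos_of_mulVec_eq_zero {A : Matrix ι ι ℝ} {φ : ι → ℕ}
    (hA : A.IsWeaklyChainedZMatrix φ) {u : ι → ℝ} (hu : A *ᵥ u = 0) (v : ι) :
    u v ≤ 0 := by
  by_contra! hv
  obtain ⟨k, -, hk⟩ := univ.exists_max_image u ⟨v, mem_univ v⟩
  obtain ⟨i, hi, hmin⟩ := (univ.filter (u · = u k)).exists_min_image φ ⟨k, by simp⟩
  rw [mem_filter] at hi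
  have hmax : ∀ j, u j ≤ u i := fun j => hi.2 ▸ hk j (mem_univ j)
  have hpos : 0 < u i := hv.trans_le (hmax v)
  obtain ⟨hsum, hprop⟩ := sum_row_eq_zero_and_eq_max_of_mulVec_eq_zero
    hA.apply_nonpos hA.sum_row_nonneg hu hmax hpos
  obtain hlt | ⟨j, hij, hφ⟩ := hA.chain i
  · exact hlt.ne' hsum
  · have hj : j ∈ univ.filter (u · = u k) := by simp [hprop j hij, hi.2]
    exact (hmin j hj).not_gt hφ

theorem IsWeaklyChainedZMatrix.det_ne_zero [DecidableEq ι] {A : Matrix ι ι ℝ} {φ : ι → ℕ}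
    (hA : A.IsWeaklyChainedZMatrix φ) : A.det ≠ 0 := by
  intro hdet
  obtain ⟨u, hu0, hu⟩ := exists_mulVec_eq_zero_iff.mpr hdet
  have hneg : A *ᵥ -u = 0 := by rw [mulVec_neg, hu, neg_zero]
  exact hu0 <| funext fun v => le_antisymm (hA.nonpos_of_mulVec_eq_zero hu v)
    (neg_nonpos.mp (hA.nonpos_of_mulVec_eq_zero hneg v))

end Matrix

section FivePoint

variable {n m : ℕ}

theorem fivePointMatrix_apply_nonpos {v w : Fin (n + 1) × Fin (m + 1)} (h : v ≠ w) :
    fivePointMatrix n m v w ≤ 0 := by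
  simp only [fivePointMatrix, Matrix.of_apply, if_neg h]
  split_ifs <;> norm_num

theorem sum_fivePointMatrix_row_of_not_interior {v : Fin (n + 1) × Fin (m + 1)}
    (hv : ¬(0 < (v.1 : ℕ) ∧ (v.1 : ℕ) < n ∧ 0 < (v.2 : ℕ) ∧ (v.2 : ℕ) < m)) :
    ∑ w, fivePointMatrix n m v w = 1 := by
  have hrow : ∀ w, fivePointMatrix n m v w = if v = w then 1 else 0 := fun w => by
    simp only [fivePointMatrix, Matrix.of_apply]
    split_ifs with h1 h2 <;> first | rfl | exact absurd h2.1 hv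
  simp [hrow]

theorem fivePointMatrix_row_of_interior {i j : ℕ} (hi0 : 0 < i) (hin : i < n) (hj0 : 0 < j)
    (hjm : j < m) (w : Fin (n + 1) × Fin (m + 1)) :
    fivePointMatrix n m (⟨i, by omega⟩, ⟨j, by omega⟩) w =
      (if w = (⟨i, by omega⟩, ⟨j, by omega⟩) then 1 else 0) -
      ((if w = (⟨i - 1, by omega⟩, ⟨j, by omega⟩) then 1 else 0) +
        (if w = (⟨i + 1, by omega⟩, ⟨j, by omega⟩) then 1 else 0) +
        (if w = (⟨i, by omega⟩, ⟨j - 1, by omega⟩) then 1 else 0) +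
        (if w = (⟨i, by omega⟩, ⟨j + 1, by omega⟩) then 1 else 0)) / 4 := by
  obtain ⟨⟨a, ha⟩, ⟨b, hb⟩⟩ := w
  simp only [fivePointMatrix, Matrix.of_apply, Prod.ext_iff, Fin.ext_iff]
  split_ifs <;> first | (exfalso; omega) | norm_num

theorem sum_fivePointMatrix_row_of_interior {i j : ℕ} (hi0 : 0 < i) (hin : i < n) (hj0 : 0 < j)
    (hjm : j < m) : ∑ w, fivePointMatrix n m (⟨i, by omega⟩, ⟨j, by omega⟩) w = 0 := by
  simp only [fivePointMatrix_row_of_interior hi0 hin hj0 hjm, sum_sub_distrib, ← sum_div,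
    sum_add_distrib, sum_ite_eq', mem_univ, if_true]
  norm_num

theorem fivePointMatrix_apply_west {i j : ℕ} (hi0 : 0 < i) (hin : i < n) (hj0 : 0 < j)
    (hjm : j < m) :
    fivePointMatrix n m (⟨i, by omega⟩, ⟨j, by omega⟩) (⟨i - 1, by omega⟩, ⟨j, by omega⟩) =
      -1 / 4 := by
  rw [fivePointMatrix_row_of_interior hi0 hin hj0 hjm]
  simp only [Prod.ext_iff, Fin.ext_iff]
  split_ifs <;> first | (exfalso; omega) | norm_num

theorem fivePointMatrix_isWeaklyChainedZMatrix :
    (fivePointMatrix n m).IsWeaklyChainedZMatrix fun v => (v.1 : ℕ) where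
  apply_nonpos _ _ := fivePointMatrix_apply_nonpos
  sum_row_nonneg v := by
    by_cases hv : 0 < (v.1 : ℕ) ∧ (v.1 : ℕ) < n ∧ 0 < (v.2 : ℕ) ∧ (v.2 : ℕ) < m
    · obtain ⟨⟨i, hi⟩, ⟨j, hj⟩⟩ := v
      obtain ⟨hi0, hin, hj0, hjm⟩ := hv
      exact (sum_fivePointMatrix_row_of_interior hi0 hin hj0 hjm).ge
    · rw [sum_fivePointMatrix_row_of_not_interior hv]
      exact zero_le_one
  chain v := by
    by_cases hv : 0 < (v.1 : ℕ) ∧ (v.1 : ℕ) < n ∧ 0 < (v.2 : ℕ) ∧ (v.2 : ℕ) < m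
    · obtain ⟨⟨i, hi⟩, ⟨j, hj⟩⟩ := v
      obtain ⟨hi0, hin, hj0, hjm⟩ := hv
      refine .inr ⟨(⟨i - 1, by omega⟩, ⟨j, hj⟩), ?_, Nat.sub_lt hi0 one_pos⟩
      rw [fivePointMatrix_apply_west hi0 hin hj0 hjm]
      norm_num
    · rw [sum_fivePointMatrix_row_of_not_interior hv]
      exact .inl one_pos

end FivePoint

theorem fivePointMatrix_invertible (n m : ℕ) : IsUnit (fivePointMatrix n m) := by
  rw [Matrix.isUnit_iff_isUnit_det, isUnit_iff_ne_zero]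
  exact fivePointMatrix_isWeaklyChainedZMatrix.det_ne_zero
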